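/- A theory T in ST^H is prime if and only if T is a meet-prime element of the lattice of all theories (ordered by inclusion, with meet = intersection), if and only if T is meet-irreducible in that lattice. -/

import Mathlib

mutual
/-- Terms over the Henkin expansion of a first-order signature: variables,
function symbols applied to lists of terms, and Henkin witness constants
`w(∀x φ)` and `w(∃x φ)`. -/
inductive HTerm : Type
  | var : ℕ → HTerm
  | func : ℕ → List HTerm → HTerm
  | wAll : ℕ → HForm → HTerm
  | wEx : ℕ → HForm → HTerm
/-- Formulas over the Henkin expansion of a first-order signature. -/
inductive HForm : Type
  | rel : ℕ → List HTerm → HForm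
  | neg : HForm → HForm
  | conj : HForm → HForm → HForm
  | disj : HForm → HForm → HForm
  | all : ℕ → HForm → HForm
  | ex : ℕ → HForm → HForm
end

mutual
/-- Substitution of a term for a variable in a Henkin term. -/
def HTerm.subst (x : ℕ) (t : HTerm) : HTerm → HTerm
  | .var y => if y = x then t else .var y
  | .func f ts => .func f (ts.attach.map (fun s => HTerm.subst x t s.1))
  | .wAll y φ => .wAll y (if y = x then φ else HForm.subst x t φ)
  | .wEx y φ => .wEx y (if y = x then φ else HForm.subst x t φ)
termination_by s => sizeOf s
decreasing_by
  all_goals simp_wf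
  all_goals first
    | (have := List.sizeOf_lt_of_mem s.2; omega)
    | omega
/-- Substitution of a term for a variable in a Henkin formula
(not substituting under a binder for the same variable). -/
def HForm.subst (x : ℕ) (t : HTerm) : HForm → HForm
  | .rel r ts => .rel r (ts.attach.map (fun s => HTerm.subst x t s.1))
  | .neg φ => .neg (HForm.subst x t φ)
  | .conj φ ψ => .conj (HForm.subst x t φ) (HForm.subst x t ψ)
  | .disj φ ψ => .disj (HForm.subst x t φ) (HForm.subst x t ψ)
  | .all y φ => .all y (if y = x then φ else HForm.subst x t φ)
  | .ex y φ => .ex y (if y = x then φ else HForm.subst x t φ)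
termination_by φ => sizeOf φ
decreasing_by
  all_goals simp_wf
  all_goals first
    | (have := List.sizeOf_lt_of_mem s.2; omega)
    | omega
end

noncomputable instance : DecidableEq HForm := Classical.decEq _

/-- A sequent: a pair of finite sets of Henkin formulas. -/
abbrev HSeq : Type := Finset HForm × Finset HForm

/-- Componentwise union of sequents. -/
noncomputable def HSeq.squnion (S₁ S₂ : HSeq) : HSeq := (S₁.1 ∪ S₂.1, S₁.2 ∪ S₂.2)

/-- Derivability in the calculus `ST^H`: identity, weakening, invertible rules
for the connectives, witness introduction/elimination rules for the Henkin
constants, and the (invertible) quantifier rules via Henkin witnesses. -/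
inductive STH (X : Set HSeq) : HSeq → Prop
  | hyp {S} : S ∈ X → STH X S
  | id (φ : HForm) : STH X ({φ}, {φ})
  | wl {Γ Δ} (φ) : STH X (Γ, Δ) → STH X (insert φ Γ, Δ)
  | wr {Γ Δ} (φ) : STH X (Γ, Δ) → STH X (Γ, insert φ Δ)
  | andL {Γ Δ φ ψ} : STH X (insert φ (insert ψ Γ), Δ) → STH X (insert (.conj φ ψ) Γ, Δ)
  | andLinv {Γ Δ φ ψ} : STH X (insert (.conj φ ψ) Γ, Δ) → STH X (insert φ (insert ψ Γ), Δ)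
  | andR {Γ Δ φ ψ} : STH X (Γ, insert φ Δ) → STH X (Γ, insert ψ Δ) →
      STH X (Γ, insert (.conj φ ψ) Δ)
  | andRinv₁ {Γ Δ φ ψ} : STH X (Γ, insert (.conj φ ψ) Δ) → STH X (Γ, insert φ Δ)
  | andRinv₂ {Γ Δ φ ψ} : STH X (Γ, insert (.conj φ ψ) Δ) → STH X (Γ, insert ψ Δ)
  | orR {Γ Δ φ ψ} : STH X (Γ, insert φ (insert ψ Δ)) → STH X (Γ, insert (.disj φ ψ) Δ)
  | orRinv {Γ Δ φ ψ} : STH X (Γ, insert (.disj φ ψ) Δ) → STH X (Γ, insert φ (insert ψ Δ))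
  | orL {Γ Δ φ ψ} : STH X (insert φ Γ, Δ) → STH X (insert ψ Γ, Δ) →
      STH X (insert (.disj φ ψ) Γ, Δ)
  | orLinv₁ {Γ Δ φ ψ} : STH X (insert (.disj φ ψ) Γ, Δ) → STH X (insert φ Γ, Δ)
  | orLinv₂ {Γ Δ φ ψ} : STH X (insert (.disj φ ψ) Γ, Δ) → STH X (insert ψ Γ, Δ)
  | negL {Γ Δ φ} : STH X (Γ, insert φ Δ) → STH X (insert (.neg φ) Γ, Δ)
  | negLinv {Γ Δ φ} : STH X (insert (.neg φ) Γ, Δ) → STH X (Γ, insert φ Δ)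
  | negR {Γ Δ φ} : STH X (insert φ Γ, Δ) → STH X (Γ, insert (.neg φ) Δ)
  | negRinv {Γ Δ φ} : STH X (Γ, insert (.neg φ) Δ) → STH X (insert φ Γ, Δ)
  | uwi {Γ Δ} {φ : HForm} {x : ℕ} (t : HTerm) : STH X (insert (φ.subst x t) Γ, Δ) →
      STH X (insert (φ.subst x (.wAll x φ)) Γ, Δ)
  | ewi {Γ Δ} {φ : HForm} {x : ℕ} (t : HTerm) : STH X (Γ, insert (φ.subst x t) Δ) →
      STH X (Γ, insert (φ.subst x (.wEx x φ)) Δ)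
  | ewe {Γ Δ} {φ : HForm} {x : ℕ} (t : HTerm) : STH X (insert (φ.subst x (.wEx x φ)) Γ, Δ) →
      STH X (insert (φ.subst x t) Γ, Δ)
  | uwe {Γ Δ} {φ : HForm} {x : ℕ} (t : HTerm) : STH X (Γ, insert (φ.subst x (.wAll x φ)) Δ) →
      STH X (Γ, insert (φ.subst x t) Δ)
  | allLW {Γ Δ} {φ : HForm} {x : ℕ} : STH X (insert (φ.subst x (.wAll x φ)) Γ, Δ) →
      STH X (insert (.all x φ) Γ, Δ)
  | allLWinv {Γ Δ} {φ : HForm} {x : ℕ} : STH X (insert (.all x φ) Γ, Δ) →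
      STH X (insert (φ.subst x (.wAll x φ)) Γ, Δ)
  | allRW {Γ Δ} {φ : HForm} {x : ℕ} : STH X (Γ, insert (φ.subst x (.wAll x φ)) Δ) →
      STH X (Γ, insert (.all x φ) Δ)
  | allRWinv {Γ Δ} {φ : HForm} {x : ℕ} : STH X (Γ, insert (.all x φ) Δ) →
      STH X (Γ, insert (φ.subst x (.wAll x φ)) Δ)
  | exLW {Γ Δ} {φ : HForm} {x : ℕ} : STH X (insert (φ.subst x (.wEx x φ)) Γ, Δ) →
      STH X (insert (.ex x φ) Γ, Δ)
  | exLWinv {Γ Δ} {φ : HForm} {x : ℕ} : STH X (insert (.ex x φ) Γ, Δ) →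
      STH X (insert (φ.subst x (.wEx x φ)) Γ, Δ)
  | exRW {Γ Δ} {φ : HForm} {x : ℕ} : STH X (Γ, insert (φ.subst x (.wEx x φ)) Δ) →
      STH X (Γ, insert (.ex x φ) Δ)
  | exRWinv {Γ Δ} {φ : HForm} {x : ℕ} : STH X (Γ, insert (.ex x φ) Δ) →
      STH X (Γ, insert (φ.subst x (.wEx x φ)) Δ)

/-- An `ST^H`-theory: a set of sequents closed under derivability. -/
def IsTheory (T : Set HSeq) : Prop := ∀ S, STH T S → S ∈ T

/-- A prime theory: `Γ ▷ Δ ∈ T` with `Γ ∪ Δ ≠ ∅` implies `γ ▷ ∅ ∈ T` for some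
`γ ∈ Γ` or `∅ ▷ δ ∈ T` for some `δ ∈ Δ`. -/
def IsPrime (T : Set HSeq) : Prop :=
  ∀ Γ Δ : Finset HForm, (Γ, Δ) ∈ T → (Γ ∪ Δ).Nonempty →
    (∃ γ ∈ Γ, (({γ} : Finset HForm), (∅ : Finset HForm)) ∈ T) ∨
    (∃ δ ∈ Δ, ((∅ : Finset HForm), ({δ} : Finset HForm)) ∈ T)


section Aux

lemma STH.cut {X Y : Set HSeq} {S} (h : STH X S) (hXY : ∀ S' ∈ X, STH Y S') :
    STH Y S := by
  induction h with
  | hyp h => exact hXY _ h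
  | id φ => exact .id φ
  | wl φ _ ih => exact .wl φ ih
  | wr φ _ ih => exact .wr φ ih
  | andL _ ih => exact .andL ih
  | andLinv _ ih => exact .andLinv ih
  | andR _ _ ih1 ih2 => exact .andR ih1 ih2
  | andRinv₁ _ ih => exact .andRinv₁ ih
  | andRinv₂ _ ih => exact .andRinv₂ ih
  | orR _ ih => exact .orR ih
  | orRinv _ ih => exact .orRinv ih
  | orL _ _ ih1 ih2 => exact .orL ih1 ih2
  | orLinv₁ _ ih => exact .orLinv₁ ih
  | orLinv₂ _ ih => exact .orLinv₂ ih
  | negL _ ih => exact .negL ih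
  | negLinv _ ih => exact .negLinv ih
  | negR _ ih => exact .negR ih
  | negRinv _ ih => exact .negRinv ih
  | uwi t _ ih => exact .uwi t ih
  | ewi t _ ih => exact .ewi t ih
  | ewe t _ ih => exact .ewe t ih
  | uwe t _ ih => exact .uwe t ih
  | allLW _ ih => exact .allLW ih
  | allLWinv _ ih => exact .allLWinv ih
  | allRW _ ih => exact .allRW ih
  | allRWinv _ ih => exact .allRWinv ih
  | exLW _ ih => exact .exLW ih
  | exLWinv _ ih => exact .exLWinv ih
  | exRW _ ih => exact .exRW ih
  | exRWinv _ ih => exact .exRWinv ih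

lemma STH.weakenL {X : Set HSeq} {Γ Δ} (Γ₀ : Finset HForm) (h : STH X (Γ, Δ)) :
    STH X (Γ₀ ∪ Γ, Δ) := by
  induction Γ₀ using Finset.induction with
  | empty => simpa
  | insert _ _ _ ih => rw [Finset.insert_union]; exact .wl _ ih

lemma STH.weakenR {X : Set HSeq} {Γ Δ} (Δ₀ : Finset HForm) (h : STH X (Γ, Δ)) :
    STH X (Γ, Δ₀ ∪ Δ) := by
  induction Δ₀ using Finset.induction with
  | empty => simpa
  | insert _ _ _ ih => rw [Finset.insert_union]; exact .wr _ ih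

lemma STH.weakenSub {X : Set HSeq} {Γ Δ Γ' Δ'} (h : STH X (Γ, Δ))
    (h1 : Γ ⊆ Γ') (h2 : Δ ⊆ Δ') : STH X (Γ', Δ') := by
  have h4 := STH.weakenR Δ' (STH.weakenL Γ' h)
  rwa [Finset.union_eq_left.mpr h1, Finset.union_eq_left.mpr h2] at h4

lemma mem_weaken {T : Set HSeq} (hT : IsTheory T) {Γ Δ Γ' Δ' : Finset HForm}
    (h : (Γ, Δ) ∈ T) (h1 : Γ ⊆ Γ') (h2 : Δ ⊆ Δ') : (Γ', Δ') ∈ T :=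
  hT _ ((STH.hyp h).weakenSub h1 h2)

lemma STH.addCtx {X : Set HSeq} {S} (h : STH X S) (Γ₀ Δ₀ : Finset HForm) :
    STH ((fun S : HSeq => (S.1 ∪ Γ₀, S.2 ∪ Δ₀)) '' X) (S.1 ∪ Γ₀, S.2 ∪ Δ₀) := by
  induction h with
  | hyp h => exact .hyp ⟨_, h, rfl⟩
  | id φ =>
      refine (STH.id φ).weakenSub ?_ ?_ <;> simp [Finset.singleton_subset_iff]
  | wl φ _ ih => simp only [Finset.insert_union] at ih ⊢; exact .wl φ ih
  | wr φ _ ih => simp only [Finset.insert_union] at ih ⊢; exact .wr φ ih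
  | andL _ ih => simp only [Finset.insert_union] at ih ⊢; exact .andL ih
  | andLinv _ ih => simp only [Finset.insert_union] at ih ⊢; exact .andLinv ih
  | andR _ _ ih1 ih2 =>
      simp only [Finset.insert_union] at ih1 ih2 ⊢; exact .andR ih1 ih2
  | andRinv₁ _ ih => simp only [Finset.insert_union] at ih ⊢; exact .andRinv₁ ih
  | andRinv₂ _ ih => simp only [Finset.insert_union] at ih ⊢; exact .andRinv₂ ih
  | orR _ ih => simp only [Finset.insert_union] at ih ⊢; exact .orR ih
  | orRinv _ ih => simp only [Finset.insert_union] at ih ⊢; exact .orRinv ih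
  | orL _ _ ih1 ih2 =>
      simp only [Finset.insert_union] at ih1 ih2 ⊢; exact .orL ih1 ih2
  | orLinv₁ _ ih => simp only [Finset.insert_union] at ih ⊢; exact .orLinv₁ ih
  | orLinv₂ _ ih => simp only [Finset.insert_union] at ih ⊢; exact .orLinv₂ ih
  | negL _ ih => simp only [Finset.insert_union] at ih ⊢; exact .negL ih
  | negLinv _ ih => simp only [Finset.insert_union] at ih ⊢; exact .negLinv ih
  | negR _ ih => simp only [Finset.insert_union] at ih ⊢; exact .negR ih
  | negRinv _ ih => simp only [Finset.insert_union] at ih ⊢; exact .negRinv ih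
  | uwi t _ ih => simp only [Finset.insert_union] at ih ⊢; exact .uwi t ih
  | ewi t _ ih => simp only [Finset.insert_union] at ih ⊢; exact .ewi t ih
  | ewe t _ ih => simp only [Finset.insert_union] at ih ⊢; exact .ewe t ih
  | uwe t _ ih => simp only [Finset.insert_union] at ih ⊢; exact .uwe t ih
  | allLW _ ih => simp only [Finset.insert_union] at ih ⊢; exact .allLW ih
  | allLWinv _ ih => simp only [Finset.insert_union] at ih ⊢; exact .allLWinv ih
  | allRW _ ih => simp only [Finset.insert_union] at ih ⊢; exact .allRW ih
  | allRWinv _ ih => simp only [Finset.insert_union] at ih ⊢; exact .allRWinv ih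
  | exLW _ ih => simp only [Finset.insert_union] at ih ⊢; exact .exLW ih
  | exLWinv _ ih => simp only [Finset.insert_union] at ih ⊢; exact .exLWinv ih
  | exRW _ ih => simp only [Finset.insert_union] at ih ⊢; exact .exRW ih
  | exRWinv _ ih => simp only [Finset.insert_union] at ih ⊢; exact .exRWinv ih

lemma isTheory_Th (X : Set HSeq) : IsTheory {S | STH X S} :=
  fun _ h => h.cut (fun _ h' => h')

/-- Key lemma: if the join of `S₁` and `S₂` is in theory `T`, and `S` is
derivable both from `T ∪ {S₁}` and from `T ∪ {S₂}`, then `S ∈ T`. -/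
lemma key {T : Set HSeq} (hT : IsTheory T) {S₁ S₂ S : HSeq}
    (hj : (S₁.1 ∪ S₂.1, S₁.2 ∪ S₂.2) ∈ T)
    (h1 : STH (T ∪ {S₁}) S) (h2 : STH (T ∪ {S₂}) S) : S ∈ T := by
  have hA : (S.1 ∪ S₂.1, S.2 ∪ S₂.2) ∈ T := by
    refine hT _ ((h1.addCtx S₂.1 S₂.2).cut ?_)
    rintro S' ⟨S'', hS'', rfl⟩
    rcases hS'' with h | h
    · exact .hyp (mem_weaken hT h Finset.subset_union_left Finset.subset_union_left)
    · rcases h with rfl; exact .hyp hj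
  have hB : S ∈ T := by
    have := h2.addCtx S.1 S.2
    rw [Finset.union_self, Finset.union_self] at this
    refine hT _ (STH.cut (by exact this) ?_)
    rintro S' ⟨S'', hS'', rfl⟩
    rcases hS'' with h | h
    · exact .hyp (mem_weaken hT h Finset.subset_union_left Finset.subset_union_left)
    · rcases h with rfl
      refine .hyp (show (_ ∪ S.1, _ ∪ S.2) ∈ T from ?_)
      rw [Finset.union_comm _ S.1, Finset.union_comm _ S.2]
      exact hA
  exact hB

end Aux


section Main

/-- From meet-primeness, the binary join-primeness of `T`. -/
lemma binaryPrime {T : Set HSeq} (hT : IsTheory T)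
    (hMP : ∀ T₁ T₂ : Set HSeq, IsTheory T₁ → IsTheory T₂ → T₁ ∩ T₂ ⊆ T → T₁ ⊆ T ∨ T₂ ⊆ T)
    {S₁ S₂ : HSeq} (h : (S₁.1 ∪ S₂.1, S₁.2 ∪ S₂.2) ∈ T) : S₁ ∈ T ∨ S₂ ∈ T := by
  have := hMP {S | STH (T ∪ {S₁}) S} {S | STH (T ∪ {S₂}) S}
    (isTheory_Th _) (isTheory_Th _) (fun S hS => key hT h hS.1 hS.2)
  rcases this with h' | h'
  · exact .inl (h' (.hyp (.inr rfl)))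
  · exact .inr (h' (.hyp (.inr rfl)))

lemma primeAux {T : Set HSeq} (hT : IsTheory T)
    (hb : ∀ S₁ S₂ : HSeq, (S₁.1 ∪ S₂.1, S₁.2 ∪ S₂.2) ∈ T → S₁ ∈ T ∨ S₂ ∈ T) :
    ∀ n (Γ Δ : Finset HForm), Γ.card + Δ.card ≤ n → (Γ, Δ) ∈ T → (Γ ∪ Δ).Nonempty →
      (∃ γ ∈ Γ, (({γ} : Finset HForm), (∅ : Finset HForm)) ∈ T) ∨
      (∃ δ ∈ Δ, ((∅ : Finset HForm), ({δ} : Finset HForm)) ∈ T) := by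
  intro n
  induction n with
  | zero =>
      intro Γ Δ hc hmem hne
      have : Γ = ∅ ∧ Δ = ∅ := by
        constructor <;> (apply Finset.card_eq_zero.mp; omega)
      rcases this with ⟨rfl, rfl⟩
      simp at hne
  | succ n ih =>
      intro Γ Δ hc hmem hne
      rcases Finset.eq_empty_or_nonempty Γ with rfl | ⟨γ, hγ⟩
      · -- Γ empty, so Δ nonempty
        have hΔ : Δ.Nonempty := by simpa using hne
        obtain ⟨δ, hδ⟩ := hΔ
        have hjoin : ((∅ : Finset HForm) ∪ ∅, ({δ} : Finset HForm) ∪ Δ.erase δ) ∈ T := by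
          have h1 : ({δ} : Finset HForm) ∪ Δ.erase δ = Δ := by
            rw [← Finset.insert_eq, Finset.insert_erase hδ]
          rw [h1]; simpa using hmem
        rcases hb ((∅ : Finset HForm), ({δ} : Finset HForm))
            ((∅ : Finset HForm), Δ.erase δ) hjoin with h' | h'
        · exact .inr ⟨δ, hδ, h'⟩
        · rcases Finset.eq_empty_or_nonempty (Δ.erase δ) with he | hne'
          · -- Δ = {δ}
            have : Δ = {δ} := by
              rwa [Finset.erase_eq_empty_iff, or_iff_right (Finset.ne_empty_of_mem hδ)] at he
            exact .inr ⟨δ, hδ, by rw [← this]; exact hmem⟩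
          · have hc' : (∅ : Finset HForm).card + (Δ.erase δ).card ≤ n := by
              have := Finset.card_erase_of_mem hδ
              have := Finset.card_pos.mpr ⟨δ, hδ⟩
              simp only [Finset.card_empty] at hc ⊢; omega
            rcases ih ∅ (Δ.erase δ) hc' h' (by simpa using hne') with h'' | ⟨δ', hδ', h''⟩
            · simp at h''
            · exact .inr ⟨δ', Finset.mem_of_mem_erase hδ', h''⟩
      · -- Γ nonempty with γ ∈ Γ
        have hjoin : (({γ} : Finset HForm) ∪ Γ.erase γ, (∅ : Finset HForm) ∪ Δ) ∈ T := by
          have h1 : ({γ} : Finset HForm) ∪ Γ.erase γ = Γ := by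
            rw [← Finset.insert_eq, Finset.insert_erase hγ]
          rw [h1]; simpa using hmem
        rcases hb (({γ} : Finset HForm), (∅ : Finset HForm)) (Γ.erase γ, Δ) hjoin with h' | h'
        · exact .inl ⟨γ, hγ, h'⟩
        · rcases Finset.eq_empty_or_nonempty (Γ.erase γ ∪ Δ) with he | hne'
          · -- erase and Δ both empty: (∅, ∅) ∈ T, weaken to ({γ}, ∅)
            rw [Finset.union_eq_empty] at he
            rcases he with ⟨he1, he2⟩
            rw [he1, he2] at h'
            exact .inl ⟨γ, hγ, mem_weaken hT h' (Finset.empty_subset _) subset_rfl⟩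
          · have hc' : (Γ.erase γ).card + Δ.card ≤ n := by
              have := Finset.card_erase_of_mem hγ
              have := Finset.card_pos.mpr ⟨γ, hγ⟩
              omega
            rcases ih (Γ.erase γ) Δ hc' h' hne' with ⟨γ', hγ', h''⟩ | h''
            · exact .inl ⟨γ', Finset.mem_of_mem_erase hγ', h''⟩
            · exact .inr h''

end Main

/-- In the lattice of theories (ordered by inclusion, meet = intersection),
a theory is prime iff it is meet-prime iff it is meet-irreducible. -/
theorem prime_iff_meetPrime_iff_meetIrreducible (T : Set HSeq) (hT : IsTheory T) :
    (IsPrime T ↔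
      (∀ T₁ T₂ : Set HSeq, IsTheory T₁ → IsTheory T₂ → T₁ ∩ T₂ ⊆ T → T₁ ⊆ T ∨ T₂ ⊆ T)) ∧
    ((∀ T₁ T₂ : Set HSeq, IsTheory T₁ → IsTheory T₂ → T₁ ∩ T₂ ⊆ T → T₁ ⊆ T ∨ T₂ ⊆ T) ↔
      (∀ T₁ T₂ : Set HSeq, IsTheory T₁ → IsTheory T₂ → T₁ ∩ T₂ = T → T = T₁ ∨ T = T₂)) := by
  have prime_imp_mp : IsPrime T →
      (∀ T₁ T₂ : Set HSeq, IsTheory T₁ → IsTheory T₂ → T₁ ∩ T₂ ⊆ T → T₁ ⊆ T ∨ T₂ ⊆ T) := by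
    intro hP T₁ T₂ h₁ h₂ hsub
    by_contra hcon
    push_neg at hcon
    obtain ⟨h1n, h2n⟩ := hcon
    obtain ⟨S₁, hS₁, hS₁n⟩ := Set.not_subset.mp h1n
    obtain ⟨S₂, hS₂, hS₂n⟩ := Set.not_subset.mp h2n
    have hj : (S₁.1 ∪ S₂.1, S₁.2 ∪ S₂.2) ∈ T := by
      refine hsub ⟨?_, ?_⟩
      · exact mem_weaken h₁ (show (S₁.1, S₁.2) ∈ T₁ from hS₁)
          Finset.subset_union_left Finset.subset_union_left
      · exact mem_weaken h₂ (show (S₂.1, S₂.2) ∈ T₂ from hS₂)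
          Finset.subset_union_right Finset.subset_union_right
    rcases Finset.eq_empty_or_nonempty ((S₁.1 ∪ S₂.1) ∪ (S₁.2 ∪ S₂.2)) with he | hne
    · rw [Finset.union_eq_empty, Finset.union_eq_empty, Finset.union_eq_empty] at he
      obtain ⟨⟨e1, e2⟩, e3, e4⟩ := he
      rw [e1, e2, e3, e4] at hj
      simp only [Finset.union_self] at hj
      exact hS₁n (by rw [show S₁ = (S₁.1, S₁.2) from rfl, e1, e3]; exact hj)
    · rcases hP _ _ hj hne with ⟨γ, hγ, hγT⟩ | ⟨δ, hδ, hδT⟩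
      · rcases Finset.mem_union.mp hγ with h | h
        · exact hS₁n (mem_weaken hT hγT (Finset.singleton_subset_iff.mpr h)
            (Finset.empty_subset _))
        · exact hS₂n (mem_weaken hT hγT (Finset.singleton_subset_iff.mpr h)
            (Finset.empty_subset _))
      · rcases Finset.mem_union.mp hδ with h | h
        · exact hS₁n (mem_weaken hT hδT (Finset.empty_subset _)
            (Finset.singleton_subset_iff.mpr h))
        · exact hS₂n (mem_weaken hT hδT (Finset.empty_subset _)
            (Finset.singleton_subset_iff.mpr h))
  have mp_imp_prime :
      (∀ T₁ T₂ : Set HSeq, IsTheory T₁ → IsTheory T₂ → T₁ ∩ T₂ ⊆ T → T₁ ⊆ T ∨ T₂ ⊆ T) →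
      IsPrime T := by
    intro hMP Γ Δ hmem hne
    exact primeAux hT (fun S₁ S₂ h => binaryPrime hT hMP h)
      (Γ.card + Δ.card) Γ Δ le_rfl hmem hne
  have mp_imp_mi :
      (∀ T₁ T₂ : Set HSeq, IsTheory T₁ → IsTheory T₂ → T₁ ∩ T₂ ⊆ T → T₁ ⊆ T ∨ T₂ ⊆ T) →
      (∀ T₁ T₂ : Set HSeq, IsTheory T₁ → IsTheory T₂ → T₁ ∩ T₂ = T → T = T₁ ∨ T = T₂) := by
    intro hMP T₁ T₂ h₁ h₂ heq
    rcases hMP T₁ T₂ h₁ h₂ heq.le with h | h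
    · exact .inl (le_antisymm (heq ▸ Set.inter_subset_left) h)
    · exact .inr (le_antisymm (heq ▸ Set.inter_subset_right) h)
  have mi_imp_mp :
      (∀ T₁ T₂ : Set HSeq, IsTheory T₁ → IsTheory T₂ → T₁ ∩ T₂ = T → T = T₁ ∨ T = T₂) →
      (∀ T₁ T₂ : Set HSeq, IsTheory T₁ → IsTheory T₂ → T₁ ∩ T₂ ⊆ T → T₁ ⊆ T ∨ T₂ ⊆ T) := by
    intro hMI T₁ T₂ h₁ h₂ hsub
    by_contra hcon
    push_neg at hcon
    obtain ⟨h1n, h2n⟩ := hcon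
    obtain ⟨S₁, hS₁, hS₁n⟩ := Set.not_subset.mp h1n
    obtain ⟨S₂, hS₂, hS₂n⟩ := Set.not_subset.mp h2n
    have hj : (S₁.1 ∪ S₂.1, S₁.2 ∪ S₂.2) ∈ T := by
      refine hsub ⟨?_, ?_⟩
      · exact mem_weaken h₁ (show (S₁.1, S₁.2) ∈ T₁ from hS₁)
          Finset.subset_union_left Finset.subset_union_left
      · exact mem_weaken h₂ (show (S₂.1, S₂.2) ∈ T₂ from hS₂)
          Finset.subset_union_right Finset.subset_union_right
    have heq : {S | STH (T ∪ {S₁}) S} ∩ {S | STH (T ∪ {S₂}) S} = T := by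
      apply Set.Subset.antisymm
      · exact fun S hS => key hT hj hS.1 hS.2
      · exact fun S hS => ⟨.hyp (.inl hS), .hyp (.inl hS)⟩
    rcases hMI _ _ (isTheory_Th _) (isTheory_Th _) heq with h | h
    · exact hS₁n (h ▸ STH.hyp (.inr rfl) : S₁ ∈ _)
    · exact hS₂n (h ▸ STH.hyp (.inr rfl) : S₂ ∈ _)
  exact ⟨⟨prime_imp_mp, mp_imp_prime⟩, ⟨mp_imp_mi, mi_imp_mp⟩⟩
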